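/- arXiv:2310.16030 — 4 statements merged into one kernel-verified Lean document; each statement's English description precedes it below -/
import Mathlib

section
/- Let μ be a Radon measure on [0,∞) and α ∈ (0,1]. Define K(t)=∫_{[0,∞)} e^{-θt} dμ(θ). Then ∫_0^1 t^{α-1} K(t) dt < ∞ if and only if ∫_{[0,∞)} min(1, θ^{-α}) dμ(θ) < ∞. -/
open MeasureTheory Filter Set ENNReal

lemma aux_lint_rpow {r : ℝ} (hr : -1 < r) {m : ℝ} (hm : 0 < m) :
    ∫⁻ t in Set.Ioo (0:ℝ) m, ENNReal.ofReal (t ^ r) = ENNReal.ofReal (m ^ (r+1) / (r+1)) := by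
  rw [← ofReal_integral_eq_lintegral_ofReal]
  · congr 1
    rw [← integral_Ioc_eq_integral_Ioo, ← intervalIntegral.integral_of_le hm.le,
        integral_rpow (Or.inl hr), Real.zero_rpow (by linarith), sub_zero]
  · exact ((intervalIntegral.intervalIntegrable_rpow' hr (a := 0) (b := m)).1).mono_set
      Set.Ioo_subset_Ioc_self
  · exact (ae_restrict_iff' measurableSet_Ioo).2 (ae_of_all _ fun t ht => Real.rpow_nonneg ht.1.le r)

lemma aux_lint_rpow2 {r α : ℝ} (hr : r = α - 3) (hα1 : α ≤ 1) {m : ℝ} (hm : 0 < m)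
    (hm1 : m ≤ 1) :
    ∫⁻ t in Set.Ico m 1, ENNReal.ofReal (t ^ r) ≤ ENNReal.ofReal (m ^ (α - 2)) := by
  rw [MeasureTheory.restrict_Ico_eq_restrict_Ioc, ← ofReal_integral_eq_lintegral_ofReal]
  · apply ENNReal.ofReal_le_ofReal
    rw [← intervalIntegral.integral_of_le hm1, integral_rpow (Or.inr ⟨by rw [hr]; linarith,
      fun h => absurd (Set.uIcc_of_le hm1 ▸ h).1 (by linarith)⟩)]
    have h2 : r + 1 = α - 2 := by rw [hr]; ring
    rw [h2, Real.one_rpow]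
    have hmr : (1:ℝ) ≤ m ^ (α - 2) := by
      calc (1:ℝ) = 1 ^ (α - 2) := (Real.one_rpow _).symm
      _ ≤ m ^ (α - 2) := Real.rpow_le_rpow_of_nonpos hm hm1 (by linarith)
    rw [div_le_iff_of_neg (by linarith : α - 2 < 0)]
    nlinarith [Real.rpow_nonneg hm.le (α-2)]
  · exact ((intervalIntegral.intervalIntegrable_rpow (Or.inr (fun h =>
      absurd (Set.uIcc_of_le hm1 ▸ h).1 (by linarith)))).1)
  · exact (ae_restrict_iff' measurableSet_Ioc).2
      (ae_of_all _ fun t ht => Real.rpow_nonneg (hm.trans ht.1).le r)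

lemma aux_bounds {α : ℝ} (hα0 : 0 < α) (hα1 : α ≤ 1) {θ : ℝ} (hθ : 0 < θ) :
    ENNReal.ofReal (Real.exp (-1) / α) * ENNReal.ofReal (min 1 (θ ^ (-α)))
      ≤ (∫⁻ t in Set.Ioo (0:ℝ) 1, ENNReal.ofReal (t ^ (α-1) * Real.exp (-θ * t))) ∧
    (∫⁻ t in Set.Ioo (0:ℝ) 1, ENNReal.ofReal (t ^ (α-1) * Real.exp (-θ * t)))
      ≤ ENNReal.ofReal (1/α + 4) * ENNReal.ofReal (min 1 (θ ^ (-α))) := by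
  have hθinv : (0:ℝ) < θ⁻¹ := inv_pos.2 hθ
  set m : ℝ := min 1 θ⁻¹ with hm
  have hm0 : 0 < m := lt_min one_pos hθinv
  have hm1 : m ≤ 1 := min_le_left _ _
  have hmθ : m ≤ θ⁻¹ := min_le_right _ _
  have hrwinv : θ ^ (-α) = θ⁻¹ ^ α := by
    rw [Real.rpow_neg hθ.le, ← Real.inv_rpow hθ.le]
  have hmα : m ^ α = min 1 (θ ^ (-α)) := by
    rw [hrwinv]
    rcases le_total 1 θ⁻¹ with h | h
    · rw [hm, min_eq_left h, Real.one_rpow, min_eq_left (Real.one_le_rpow h hα0.le)]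
    · rw [hm, min_eq_right h, min_eq_right (Real.rpow_le_one hθinv.le h hα0.le)]
  have hIoo : (∫⁻ t in Set.Ioo (0:ℝ) m, ENNReal.ofReal (t ^ (α-1)))
      = ENNReal.ofReal (m ^ α / α) := by
    rw [aux_lint_rpow (by linarith) hm0]
    norm_num
  constructor
  · calc ENNReal.ofReal (Real.exp (-1) / α) * ENNReal.ofReal (min 1 (θ ^ (-α)))
        = ENNReal.ofReal (Real.exp (-1)) * ENNReal.ofReal (m ^ α / α) := by
          rw [← hmα, ← ENNReal.ofReal_mul (by positivity), ← ENNReal.ofReal_mul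
            (Real.exp_nonneg _)]
          congr 1; ring
      _ = ∫⁻ t in Set.Ioo (0:ℝ) m, ENNReal.ofReal (Real.exp (-1)) * ENNReal.ofReal (t ^ (α-1)) := by
          rw [lintegral_const_mul' _ _ ENNReal.ofReal_ne_top, hIoo]
      _ ≤ ∫⁻ t in Set.Ioo (0:ℝ) m, ENNReal.ofReal (t ^ (α-1) * Real.exp (-θ * t)) := by
          apply setLIntegral_mono' measurableSet_Ioo
          intro t ht
          rw [← ENNReal.ofReal_mul (Real.exp_nonneg _)]
          apply ENNReal.ofReal_le_ofReal
          rw [mul_comm]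
          apply mul_le_mul_of_nonneg_left _ (Real.rpow_nonneg ht.1.le _)
          apply Real.exp_le_exp.2
          have : θ * t ≤ 1 := by
            have h1 : t ≤ θ⁻¹ := le_trans ht.2.le hmθ
            calc θ * t ≤ θ * θ⁻¹ := by nlinarith
            _ = 1 := mul_inv_cancel₀ hθ.ne'
          nlinarith
      _ ≤ ∫⁻ t in Set.Ioo (0:ℝ) 1, ENNReal.ofReal (t ^ (α-1) * Real.exp (-θ * t)) :=
          lintegral_mono_set (Set.Ioo_subset_Ioo_right hm1)
  · have piece1 : (∫⁻ t in Set.Ioo (0:ℝ) m, ENNReal.ofReal (t ^ (α-1) * Real.exp (-θ * t)))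
        ≤ ENNReal.ofReal (m ^ α / α) := by
      rw [← hIoo]
      apply setLIntegral_mono' measurableSet_Ioo
      intro t ht
      apply ENNReal.ofReal_le_ofReal
      have h1 : Real.exp (-θ * t) ≤ 1 := Real.exp_le_one_iff.2 (by nlinarith [ht.1])
      nlinarith [Real.rpow_nonneg ht.1.le (α-1), Real.exp_nonneg (-θ*t)]
    rcases le_or_gt θ 1 with hθ1 | hθ1
    · -- θ ≤ 1 : min = 1
      have hmin : min 1 (θ ^ (-α)) = 1 :=
        min_eq_left (Real.one_le_rpow_of_pos_of_le_one_of_nonpos hθ hθ1 (by linarith))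
      have hmeq : m = 1 := min_eq_left (one_le_inv_iff₀.2 ⟨hθ, hθ1⟩)
      rw [hmin, ENNReal.ofReal_one, mul_one]
      calc (∫⁻ t in Set.Ioo (0:ℝ) 1, ENNReal.ofReal (t ^ (α-1) * Real.exp (-θ * t)))
          = ∫⁻ t in Set.Ioo (0:ℝ) m, ENNReal.ofReal (t ^ (α-1) * Real.exp (-θ * t)) := by
            rw [hmeq]
        _ ≤ ENNReal.ofReal (m ^ α / α) := piece1
        _ ≤ ENNReal.ofReal (1/α + 4) := by
            apply ENNReal.ofReal_le_ofReal
            rw [hmeq, Real.one_rpow]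
            have : 0 < 1/α := by positivity
            linarith
    · -- 1 < θ
      have hmeq : m = θ⁻¹ := min_eq_right ((inv_le_one₀ hθ).2 hθ1.le)
      have hmin : min 1 (θ ^ (-α)) = θ ^ (-α) :=
        min_eq_right (Real.rpow_le_one_of_one_le_of_nonpos hθ1.le (by linarith))
      have hsub : Set.Ioo (0:ℝ) 1 ⊆ Set.Ioo 0 m ∪ Set.Ico m 1 := by
        intro t ht
        rcases lt_or_ge t m with h | h
        · exact Or.inl ⟨ht.1, h⟩
        · exact Or.inr ⟨h, ht.2⟩
      have piece2 : (∫⁻ t in Set.Ico m 1, ENNReal.ofReal (t ^ (α-1) * Real.exp (-θ * t)))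
          ≤ ENNReal.ofReal (4 * θ ^ (-α)) := by
        have step1 : (∫⁻ t in Set.Ico m 1, ENNReal.ofReal (t ^ (α-1) * Real.exp (-θ * t)))
            ≤ ∫⁻ t in Set.Ico m 1, ENNReal.ofReal (4 * θ ^ (-(2:ℝ))) *
                ENNReal.ofReal (t ^ (α-3)) := by
          apply setLIntegral_mono' measurableSet_Ico
          intro t ht
          have ht0 : 0 < t := hm0.trans_le ht.1
          rw [← ENNReal.ofReal_mul (by positivity)]
          apply ENNReal.ofReal_le_ofReal
          -- key pointwise bound
          have hu : 0 < θ * t := by positivity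
          have he : (θ * t)^2 ≤ 4 * Real.exp (θ * t) := by
            have h2 : θ * t / 2 ≤ Real.exp (θ * t / 2) := by
              linarith [Real.add_one_le_exp (θ * t / 2)]
            have h3 : (θ * t / 2)^2 ≤ Real.exp (θ * t / 2)^2 := by
              apply pow_le_pow_left₀ (by positivity) h2
            rw [← Real.exp_nat_mul, show ((2:ℕ):ℝ) * (θ * t / 2) = θ * t by push_cast; ring]
              at h3
            nlinarith [h3]
          have ht2 : t^2 * Real.exp (-(θ * t)) ≤ 4 / θ^2 := by
            rw [Real.exp_neg, mul_comm, ← div_eq_inv_mul, div_le_div_iff₀ (Real.exp_pos _)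
              (by positivity)]
            nlinarith [he]
          have hsplit : t ^ (α-1) = t ^ (α-3) * t^2 := by
            rw [show α - 1 = (α-3) + 2 by ring, Real.rpow_add ht0, Real.rpow_two]
          calc t ^ (α-1) * Real.exp (-θ * t) = t ^ (α-3) * (t^2 * Real.exp (-(θ * t))) := by
                rw [hsplit, neg_mul]; ring
            _ ≤ t ^ (α-3) * (4 / θ^2) :=
                mul_le_mul_of_nonneg_left ht2 (Real.rpow_nonneg ht0.le _)
            _ = 4 * θ ^ (-(2:ℝ)) * t ^ (α-3) := by
                rw [Real.rpow_neg hθ.le, Real.rpow_two]; ring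
        calc (∫⁻ t in Set.Ico m 1, ENNReal.ofReal (t ^ (α-1) * Real.exp (-θ * t)))
            ≤ ∫⁻ t in Set.Ico m 1, ENNReal.ofReal (4 * θ ^ (-(2:ℝ))) *
                ENNReal.ofReal (t ^ (α-3)) := step1
          _ = ENNReal.ofReal (4 * θ ^ (-(2:ℝ))) * ∫⁻ t in Set.Ico m 1,
                ENNReal.ofReal (t ^ (α-3)) := lintegral_const_mul' _ _ ENNReal.ofReal_ne_top
          _ ≤ ENNReal.ofReal (4 * θ ^ (-(2:ℝ))) * ENNReal.ofReal (m ^ (α-2)) := by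
              exact mul_le_mul_right (aux_lint_rpow2 rfl hα1 hm0 hm1) _
          _ = ENNReal.ofReal (4 * θ ^ (-α)) := by
              rw [← ENNReal.ofReal_mul (by positivity)]
              congr 1
              rw [hmeq, Real.inv_rpow hθ.le, ← Real.rpow_neg hθ.le, mul_assoc,
                ← Real.rpow_add hθ, show (-(2:ℝ)) + -(α-2) = -α by ring]
      calc (∫⁻ t in Set.Ioo (0:ℝ) 1, ENNReal.ofReal (t ^ (α-1) * Real.exp (-θ * t)))
          ≤ ∫⁻ t in Set.Ioo 0 m ∪ Set.Ico m 1, ENNReal.ofReal (t ^ (α-1) * Real.exp (-θ * t)) :=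
            lintegral_mono_set hsub
        _ ≤ (∫⁻ t in Set.Ioo (0:ℝ) m, ENNReal.ofReal (t ^ (α-1) * Real.exp (-θ * t)))
            + ∫⁻ t in Set.Ico m 1, ENNReal.ofReal (t ^ (α-1) * Real.exp (-θ * t)) :=
            lintegral_union_le _ _ _
        _ ≤ ENNReal.ofReal (m ^ α / α) + ENNReal.ofReal (4 * θ ^ (-α)) :=
            add_le_add piece1 piece2
        _ = ENNReal.ofReal (1/α + 4) * ENNReal.ofReal (min 1 (θ ^ (-α))) := by
            rw [hmin, ← ENNReal.ofReal_add (by positivity) (by positivity),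
              ← ENNReal.ofReal_mul (by positivity)]
            congr 1
            rw [hmα, hmin]
            ring

/-- For a Radon measure `μ` on `[0,∞)`, `α ∈ (0,1]`, and
`K t = ∫ θ, exp (-θ t) dμ`, one has `∫_0^1 t^(α-1) K t dt < ∞` iff
`∫ min(1, θ^(-α)) dμ < ∞`. -/
theorem stmt_1 (μ : Measure ℝ) [IsLocallyFiniteMeasure μ]
    (hμsupp : μ (Set.Iio 0) = 0) (α : ℝ) (hα : α ∈ Set.Ioc (0:ℝ) 1)
    (K : ℝ → ℝ≥0∞)
    (hK : ∀ t > 0, K t = ∫⁻ θ, ENNReal.ofReal (Real.exp (-θ * t)) ∂μ)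
    (hfin : ∀ t > 0, K t < ⊤) :
    (∫⁻ t in Set.Ioo (0:ℝ) 1, ENNReal.ofReal (t ^ (α - 1)) * K t) < ⊤ ↔
      (∫⁻ θ, ENNReal.ofReal (min 1 (θ ^ (-α))) ∂μ) < ⊤ := by
  obtain ⟨hα0, hα1⟩ := hα
  set G : ℝ → ℝ≥0∞ :=
    fun θ => ∫⁻ t in Set.Ioo (0:ℝ) 1, ENNReal.ofReal (t ^ (α-1) * Real.exp (-θ * t)) with hGdef
  have hfmeas : Measurable (fun p : ℝ × ℝ =>
      ENNReal.ofReal (p.1 ^ (α-1) * Real.exp (-p.2 * p.1))) := by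
    apply ENNReal.measurable_ofReal.comp
    exact (measurable_fst.pow_const _ |>.mul ((measurable_snd.neg.mul measurable_fst).exp))
  -- Step A: Tonelli
  have hswap : (∫⁻ t in Set.Ioo (0:ℝ) 1, ENNReal.ofReal (t ^ (α - 1)) * K t)
      = ∫⁻ θ, G θ ∂μ := by
    have h1 : (∫⁻ t in Set.Ioo (0:ℝ) 1, ENNReal.ofReal (t ^ (α - 1)) * K t)
        = ∫⁻ t in Set.Ioo (0:ℝ) 1, ∫⁻ θ, ENNReal.ofReal (t ^ (α-1) * Real.exp (-θ * t)) ∂μ := by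
      apply setLIntegral_congr_fun measurableSet_Ioo
      intro t ht
      beta_reduce
      rw [hK t ht.1, ← lintegral_const_mul' _ _ ENNReal.ofReal_ne_top]
      apply lintegral_congr
      intro θ
      rw [← ENNReal.ofReal_mul (Real.rpow_nonneg ht.1.le _)]
    rw [h1]
    exact lintegral_lintegral_swap hfmeas.aemeasurable
  -- decomposition of integrals over μ
  have hsplit : ∀ F : ℝ → ℝ≥0∞, (∫⁻ θ, F θ ∂μ) = F 0 * μ {0} + ∫⁻ θ in Set.Ioi (0:ℝ), F θ ∂μ := by
    intro F
    rw [← lintegral_add_compl F measurableSet_Ici (μ := μ), Set.compl_Ici,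
        setLIntegral_measure_zero _ _ hμsupp, add_zero, ← Set.Ioi_insert, Set.insert_eq,
        lintegral_union measurableSet_Ioi (by simp), lintegral_singleton]
  have hG0 : G 0 = ENNReal.ofReal (1 / α) := by
    rw [hGdef]
    simp only [neg_zero, zero_mul, Real.exp_zero, mul_one]
    rw [aux_lint_rpow (by linarith) one_pos]
    norm_num
  have hg0 : ENNReal.ofReal (min 1 ((0:ℝ) ^ (-α))) = 0 := by
    rw [Real.zero_rpow (neg_ne_zero.2 hα0.ne')]
    simp
  rw [hswap, hsplit G, hsplit (fun θ => ENNReal.ofReal (min 1 (θ ^ (-α))))]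
  simp only [hg0, zero_mul, zero_add]
  have hG0fin : G 0 * μ {0} < ⊤ := by
    rw [hG0]
    exact ENNReal.mul_lt_top ENNReal.ofReal_lt_top (IsCompact.measure_lt_top isCompact_singleton)
  rw [ENNReal.add_lt_top]
  have hforward : (∫⁻ θ in Set.Ioi (0:ℝ), G θ ∂μ) < ⊤ →
      (∫⁻ θ in Set.Ioi (0:ℝ), ENNReal.ofReal (min 1 (θ ^ (-α))) ∂μ) < ⊤ := by
    intro hG
    have hle : ENNReal.ofReal (Real.exp (-1) / α) *
        (∫⁻ θ in Set.Ioi (0:ℝ), ENNReal.ofReal (min 1 (θ ^ (-α))) ∂μ)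
        ≤ ∫⁻ θ in Set.Ioi (0:ℝ), G θ ∂μ := by
      rw [← lintegral_const_mul' _ _ ENNReal.ofReal_ne_top]
      apply setLIntegral_mono' measurableSet_Ioi
      intro θ hθ
      exact (aux_bounds hα0 hα1 hθ).1
    by_contra h
    rw [not_lt, top_le_iff] at h
    rw [h, ENNReal.mul_top (by
      simp only [ne_eq, ENNReal.ofReal_eq_zero, not_le]
      positivity)] at hle
    exact absurd (top_le_iff.1 hle) (by simpa using hG.ne)
  have hback : (∫⁻ θ in Set.Ioi (0:ℝ), ENNReal.ofReal (min 1 (θ ^ (-α))) ∂μ) < ⊤ →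
      (∫⁻ θ in Set.Ioi (0:ℝ), G θ ∂μ) < ⊤ := by
    intro hg
    have hle : (∫⁻ θ in Set.Ioi (0:ℝ), G θ ∂μ) ≤ ENNReal.ofReal (1/α + 4) *
        ∫⁻ θ in Set.Ioi (0:ℝ), ENNReal.ofReal (min 1 (θ ^ (-α))) ∂μ := by
      rw [← lintegral_const_mul' _ _ ENNReal.ofReal_ne_top]
      apply setLIntegral_mono' measurableSet_Ioi
      intro θ hθ
      exact (aux_bounds hα0 hα1 hθ).2
    exact lt_of_le_of_lt hle (ENNReal.mul_lt_top ENNReal.ofReal_lt_top hg)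
  constructor
  · rintro ⟨-, h2⟩
    exact hforward h2
  · intro h
    exact ⟨hG0fin, hback h⟩
end

section
/- With μ, r, r_m, ε_m, R_m as above, it holds that lim_{m→∞} ε_m / r(m) = 0 and lim_{m→∞} R_m ε_m = 0. -/
open MeasureTheory Set Filter

lemma tail_tendsto_aux (μ : Measure ℝ) (r : ℝ → ℝ) (hr0 : ∀ θ, 0 ≤ r θ)
    (hrint : Integrable r μ) :
    Tendsto (fun m : ℝ => ∫ θ, (Ioi m).indicator r θ ∂μ) atTop (nhds 0) := by
  have hN : Tendsto (fun n : ℕ => ∫ θ, (Ioi (n : ℝ)).indicator r θ ∂μ) atTop (nhds 0) := by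
    have h0 : (0 : ℝ) = ∫ _ : ℝ, (0 : ℝ) ∂μ := by simp
    rw [h0]
    apply tendsto_integral_of_dominated_convergence r
      (fun n => hrint.1.indicator measurableSet_Ioi) hrint
    · intro n
      filter_upwards [] with θ
      by_cases h : θ ∈ Ioi (n : ℝ)
      · rw [indicator_of_mem h, Real.norm_eq_abs, abs_of_nonneg (hr0 θ)]
      · rw [indicator_of_notMem h]
        simpa using hr0 θ
    · filter_upwards [] with θ
      apply tendsto_const_nhds.congr'
      filter_upwards [eventually_ge_atTop ⌈θ⌉₊] with n hn
      rw [indicator_of_notMem]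
      simp only [mem_Ioi, not_lt]
      exact (Nat.le_ceil θ).trans (by exact_mod_cast hn)
  have hanti : Antitone (fun m : ℝ => ∫ θ, (Ioi m).indicator r θ ∂μ) := by
    intro m₁ m₂ h
    apply integral_mono_of_nonneg
    · filter_upwards [] with θ
      exact indicator_nonneg (fun x _ => hr0 x) θ
    · exact hrint.indicator measurableSet_Ioi
    · filter_upwards [] with θ
      exact indicator_le_indicator_of_subset (Ioi_subset_Ioi h) hr0 θ
  apply tendsto_of_tendsto_of_tendsto_of_le_of_le'
    tendsto_const_nhds (hN.comp tendsto_nat_floor_atTop)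
  · filter_upwards [] with m
    exact integral_nonneg (indicator_nonneg (fun x _ => hr0 x))
  · filter_upwards [eventually_ge_atTop (0 : ℝ)] with m hm
    exact hanti (Nat.floor_le hm)

/-- With `R_m = ∫ r_m dμ` and `ε_m = ∫ (1-r_m)² θ⁻¹ r_m⁻¹ dμ`,
one has `ε_m / r m → 0` and `R_m ε_m → 0` as `m → ∞`. -/
theorem stmt_9 (μ : Measure ℝ) (hμsupp : μ (Set.Iio 0) = 0)
    (r : ℝ → ℝ) (hrpos : ∀ θ, 0 < r θ) (hrle : ∀ θ, r θ ≤ 1)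
    (hrlb : ∀ θ > (0:ℝ), min 1 (θ ^ (-(1/2 : ℝ))) ≤ r θ)
    (hranti : Antitone r) (hrint : Integrable r μ) :
    Tendsto (fun m : ℝ =>
        (∫ θ, (1 - r (max m θ) / r m) ^ 2 * θ⁻¹ * (r (max m θ) / r m)⁻¹ ∂μ) / r m)
      atTop (nhds 0) ∧
    Tendsto (fun m : ℝ =>
        (∫ θ, r (max m θ) / r m ∂μ) *
          ∫ θ, (1 - r (max m θ) / r m) ^ 2 * θ⁻¹ * (r (max m θ) / r m)⁻¹ ∂μ)
      atTop (nhds 0) := by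
  have hrm : ∀ θ, 0 ≤ r θ := fun θ => (hrpos θ).le
  set tail : ℝ → ℝ := fun m => ∫ θ, (Ioi m).indicator r θ ∂μ with htaildef
  have htail0 : Tendsto tail atTop (nhds 0) := tail_tendsto_aux μ r hrm hrint
  have hae : ∀ᵐ θ ∂μ, (0 : ℝ) ≤ θ := by
    rw [ae_iff]
    simpa only [not_le] using (show μ {a : ℝ | a < 0} = 0 from hμsupp)
  set ε : ℝ → ℝ := fun m =>
    ∫ θ, (1 - r (max m θ) / r m) ^ 2 * θ⁻¹ * (r (max m θ) / r m)⁻¹ ∂μ with hεdef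
  set R : ℝ → ℝ := fun m => ∫ θ, r (max m θ) / r m ∂μ with hRdef
  -- nonnegativity of ε
  have hεnn : ∀ m : ℝ, 0 ≤ ε m := by
    intro m
    apply integral_nonneg_of_ae
    filter_upwards [hae] with θ hθ
    exact mul_nonneg (mul_nonneg (sq_nonneg _) (inv_nonneg.2 hθ))
      (inv_nonneg.2 (div_nonneg (hrm _) (hrm m)))
  -- key bound : ε m ≤ r m * tail m for m ≥ 1
  have hεle : ∀ m : ℝ, 1 ≤ m → ε m ≤ r m * tail m := by
    intro m hm
    have hint : Integrable (fun θ => r m * (Ioi m).indicator r θ) μ :=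
      (hrint.indicator measurableSet_Ioi).const_mul (r m)
    have h := integral_mono_of_nonneg (f := fun θ =>
        (1 - r (max m θ) / r m) ^ 2 * θ⁻¹ * (r (max m θ) / r m)⁻¹)
        (g := fun θ => r m * (Ioi m).indicator r θ) ?_ hint ?_
    · rw [integral_const_mul] at h
      exact h
    · filter_upwards [hae] with θ hθ
      exact mul_nonneg (mul_nonneg (sq_nonneg _) (inv_nonneg.2 hθ))
        (inv_nonneg.2 (div_nonneg (hrm _) (hrm m)))
    · filter_upwards [hae] with θ hθ
      rcases le_or_gt θ m with hθm | hθm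
      · rw [max_eq_left hθm, div_self (hrpos m).ne',
          indicator_of_notMem (by simpa using hθm)]
        simp
      · rw [max_eq_right hθm.le, indicator_of_mem (show θ ∈ Ioi m from hθm) r]
        set a := r m with hadef
        set b := r θ with hbdef
        have ha := hrpos m
        have hb := hrpos θ
        have hba : b ≤ a := hranti hθm.le
        have hθ1 : (1 : ℝ) ≤ θ := hm.trans hθm.le
        have hθpos : (0 : ℝ) < θ := by linarith
        have hlb := hrlb θ hθpos
        have hmin : min 1 (θ ^ (-(1/2 : ℝ))) = θ ^ (-(1/2 : ℝ)) :=
          min_eq_right (Real.rpow_le_one_of_one_le_of_nonpos hθ1 (by norm_num))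
        rw [hmin] at hlb
        have hsq : θ ^ (-(1/2 : ℝ)) * θ ^ (-(1/2 : ℝ)) = θ⁻¹ := by
          rw [← Real.rpow_add hθpos]
          norm_num
          exact Real.rpow_neg_one θ
        have hinv : θ⁻¹ ≤ b * b := by
          rw [← hsq]
          exact mul_le_mul hlb hlb (Real.rpow_nonneg hθpos.le _) (hrm θ)
        have hx0 : 0 ≤ b / a := div_nonneg hb.le ha.le
        have hx1 : b / a ≤ 1 := (div_le_one ha).2 hba
        have h1 : (1 - b / a) ^ 2 ≤ 1 := by nlinarith
        have h2 : (1 - b / a) ^ 2 * θ⁻¹ ≤ 1 * (b * b) :=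
          mul_le_mul h1 hinv (inv_nonneg.2 hθpos.le) zero_le_one
        have h3 : (1 - b / a) ^ 2 * θ⁻¹ * (a / b) ≤ 1 * (b * b) * (a / b) :=
          mul_le_mul_of_nonneg_right h2 (div_nonneg ha.le hb.le)
        have h4 : 1 * (b * b) * (a / b) = a * b := by
          field_simp
        rw [inv_div]
        linarith
  -- bound for R
  have hRnn : ∀ m : ℝ, 0 ≤ R m := by
    intro m
    exact integral_nonneg fun θ => div_nonneg (hrm _) (hrm m)
  have hRle : ∀ m : ℝ, R m ≤ (∫ θ, r θ ∂μ) / r m := by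
    intro m
    have h := integral_mono_of_nonneg (f := fun θ => r (max m θ) / r m)
        (g := fun θ => r θ / r m)
        (Filter.Eventually.of_forall fun θ => div_nonneg (hrm _) (hrm m))
        (hrint.div_const (r m))
        (Filter.Eventually.of_forall fun θ =>
          (div_le_div_iff_of_pos_right (hrpos m)).mpr (hranti (le_max_right m θ)))
    exact h.trans_eq (integral_div (r m) r)
  constructor
  · apply tendsto_of_tendsto_of_tendsto_of_le_of_le' tendsto_const_nhds htail0
    · filter_upwards [] with m
      exact div_nonneg (hεnn m) (hrm m)
    · filter_upwards [eventually_ge_atTop (1 : ℝ)] with m hm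
      rw [div_le_iff₀ (hrpos m)]
      linarith [hεle m hm, mul_comm (r m) (tail m)]
  · have h2 : Tendsto (fun m => (∫ θ, r θ ∂μ) * tail m) atTop (nhds 0) := by
      simpa using htail0.const_mul (∫ θ, r θ ∂μ)
    apply tendsto_of_tendsto_of_tendsto_of_le_of_le' tendsto_const_nhds h2
    · filter_upwards [] with m
      exact mul_nonneg (hRnn m) (hεnn m)
    · filter_upwards [eventually_ge_atTop (1 : ℝ)] with m hm
      have hI : 0 ≤ ∫ θ, r θ ∂μ := integral_nonneg hrm
      have h3 : R m * ε m ≤ ((∫ θ, r θ ∂μ) / r m) * (r m * tail m) :=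
        mul_le_mul (hRle m) (hεle m hm) (hεnn m) (div_nonneg hI (hrm m))
      have h4 : ((∫ θ, r θ ∂μ) / r m) * (r m * tail m) = (∫ θ, r θ ∂μ) * tail m := by
        have hne := (hrpos m).ne'
        field_simp
      linarith
end

section
/- For the fractional kernel with exponent α ∈ (1/2,1) and r(θ)=min(1,θ^{-η}), η ∈ (1-α,1/2], one has for every m ≥ 1: ε_m = (Γ(α)Γ(1-α))^{-1} · 2η²/(α(α-η)(α+η)) · m^{-α}, where ε_m = ∫ (1-r_m(θ))² θ^{-1} r_m(θ)^{-1} dμ(θ). -/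
open MeasureTheory Set

/-- For the fractional kernel measure with `α ∈ (1/2,1)` and
`r(θ) = min(1, θ^(-η))`, `η ∈ (1-α, 1/2]`, one has for every `m ≥ 1`:
`ε_m = (Γ(α)Γ(1-α))⁻¹ · 2η²/(α(α-η)(α+η)) · m^(-α)`. -/
theorem stmt_11 (α η : ℝ) (hα : α ∈ Set.Ioo (1/2 : ℝ) 1)
    (hη : η ∈ Set.Ioc (1 - α) (1/2 : ℝ)) (m : ℝ) (hm : 1 ≤ m) :
    (∫ θ in Set.Ioi (0:ℝ),
        (1 - min 1 ((max m θ) ^ (-η)) / min 1 (m ^ (-η))) ^ 2 * θ⁻¹ *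
          (min 1 ((max m θ) ^ (-η)) / min 1 (m ^ (-η)))⁻¹ *
          ((Real.Gamma α * Real.Gamma (1 - α))⁻¹ * θ ^ (-α)))
      = (Real.Gamma α * Real.Gamma (1 - α))⁻¹ *
          (2 * η ^ 2 / (α * (α - η) * (α + η))) * m ^ (-α) := by
  obtain ⟨hα1, hα2⟩ := hα
  obtain ⟨hη1, hη2⟩ := hη
  have hm0 : (0:ℝ) < m := lt_of_lt_of_le one_pos hm
  have hη0 : 0 < η := by linarith
  have hαη : η < α := by linarith
  set C : ℝ := (Real.Gamma α * Real.Gamma (1 - α))⁻¹ with hC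
  set f : ℝ → ℝ := fun θ =>
      (1 - min 1 ((max m θ) ^ (-η)) / min 1 (m ^ (-η))) ^ 2 * θ⁻¹ *
        (min 1 ((max m θ) ^ (-η)) / min 1 (m ^ (-η)))⁻¹ * (C * θ ^ (-α)) with hf
  have hmη : min 1 (m ^ (-η)) = m ^ (-η) :=
    min_eq_right (Real.rpow_le_one_of_one_le_of_nonpos hm (by linarith))
  have hmη0 : (0:ℝ) < m ^ (-η) := Real.rpow_pos_of_pos hm0 _
  -- f vanishes on Ioc 0 m
  have hzero : EqOn f (fun _ => (0:ℝ)) (Ioc 0 m) := by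
    intro θ hθ
    have : max m θ = m := max_eq_left hθ.2
    simp only [hf, this, hmη, div_self (ne_of_gt hmη0)]
    ring
  -- f equals g on Ioi m
  set g : ℝ → ℝ := fun x =>
      C * (m ^ (-η) * x ^ (η - α - 1) - 2 * x ^ (-α - 1) + m ^ η * x ^ (-η - α - 1)) with hg
  have heq : EqOn f g (Ioi m) := by
    intro x hx
    have hx0 : (0:ℝ) < x := lt_trans hm0 hx
    have hx1 : (1:ℝ) ≤ x := le_of_lt (lt_of_le_of_lt hm hx)
    have hmax : max m x = x := max_eq_right (le_of_lt hx)
    have hxη : min 1 (x ^ (-η)) = x ^ (-η) :=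
      min_eq_right (Real.rpow_le_one_of_one_le_of_nonpos hx1 (by linarith))
    have hxη0 : (0:ℝ) < x ^ (-η) := Real.rpow_pos_of_pos hx0 _
    simp only [hf, hg, hmax, hxη, hmη]
    have e1 : x ^ (η - α - 1) = x ^ η * x⁻¹ * x ^ (-α) := by
      rw [← Real.rpow_neg_one x, ← Real.rpow_add hx0, ← Real.rpow_add hx0]; ring_nf
    have e2 : x ^ (-α - 1) = x⁻¹ * x ^ (-α) := by
      rw [← Real.rpow_neg_one x, ← Real.rpow_add hx0]; ring_nf
    have e3 : x ^ (-η - α - 1) = x ^ (-η) * x⁻¹ * x ^ (-α) := by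
      rw [← Real.rpow_neg_one x, ← Real.rpow_add hx0, ← Real.rpow_add hx0]; ring_nf
    have e4 : x ^ η * x ^ (-η) = 1 := by
      rw [← Real.rpow_add hx0]; simp
    have e5 : m ^ η * m ^ (-η) = 1 := by
      rw [← Real.rpow_add hm0]; simp
    have rx : x ^ (-η) = (x ^ η)⁻¹ := Real.rpow_neg hx0.le η
    have rm : m ^ (-η) = (m ^ η)⁻¹ := Real.rpow_neg hm0.le η
    have hA : x ^ η ≠ 0 := ne_of_gt (Real.rpow_pos_of_pos hx0 _)
    have hM : m ^ η ≠ 0 := ne_of_gt (Real.rpow_pos_of_pos hm0 _)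
    rw [e1, e2, e3, rx, rm]
    field_simp
    ring
  -- exponent bounds
  have p1 : η - α - 1 < -1 := by linarith
  have p2 : -α - 1 < -1 := by linarith
  have p3 : -η - α - 1 < -1 := by linarith
  have hgint : IntegrableOn g (Ioi m) := by
    apply Integrable.const_mul
    exact (((integrableOn_Ioi_rpow_of_lt p1 hm0).const_mul _).sub
      ((integrableOn_Ioi_rpow_of_lt p2 hm0).const_mul _)).add
      ((integrableOn_Ioi_rpow_of_lt p3 hm0).const_mul _)
  have hsplit : Ioi (0:ℝ) = Ioc 0 m ∪ Ioi m := (Ioc_union_Ioi_eq_Ioi (le_of_lt hm0)).symm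
  have key : ∫ θ in Ioi (0:ℝ), f θ = ∫ θ in Ioi m, g θ := by
    rw [hsplit, setIntegral_union (Ioc_disjoint_Ioi le_rfl) measurableSet_Ioi
      ((integrableOn_zero).congr_fun (fun x hx => (hzero hx).symm) measurableSet_Ioc)
      (hgint.congr_fun (fun x hx => (heq hx).symm) measurableSet_Ioi)]
    rw [setIntegral_congr_fun measurableSet_Ioc hzero,
      setIntegral_congr_fun measurableSet_Ioi heq]
    simp
  rw [show (∫ θ in Set.Ioi (0:ℝ),
        (1 - min 1 ((max m θ) ^ (-η)) / min 1 (m ^ (-η))) ^ 2 * θ⁻¹ *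
          (min 1 ((max m θ) ^ (-η)) / min 1 (m ^ (-η)))⁻¹ * (C * θ ^ (-α)))
      = ∫ θ in Ioi (0:ℝ), f θ from rfl, key]
  rw [hg]
  rw [integral_const_mul]
  have i1 : ∫ x in Ioi m, m ^ (-η) * x ^ (η - α - 1)
      = m ^ (-η) * (-m ^ (η - α - 1 + 1) / (η - α - 1 + 1)) := by
    rw [integral_const_mul, integral_Ioi_rpow_of_lt p1 hm0]
  have i2 : ∫ x in Ioi m, 2 * x ^ (-α - 1)
      = 2 * (-m ^ (-α - 1 + 1) / (-α - 1 + 1)) := by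
    rw [integral_const_mul, integral_Ioi_rpow_of_lt p2 hm0]
  have i3 : ∫ x in Ioi m, m ^ η * x ^ (-η - α - 1)
      = m ^ η * (-m ^ (-η - α - 1 + 1) / (-η - α - 1 + 1)) := by
    rw [integral_const_mul, integral_Ioi_rpow_of_lt p3 hm0]
  have hI1 : IntegrableOn (fun x : ℝ => m ^ (-η) * x ^ (η - α - 1)) (Ioi m) :=
    (integrableOn_Ioi_rpow_of_lt p1 hm0).const_mul _
  have hI2 : IntegrableOn (fun x : ℝ => 2 * x ^ (-α - 1)) (Ioi m) :=
    (integrableOn_Ioi_rpow_of_lt p2 hm0).const_mul _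
  have hI3 : IntegrableOn (fun x : ℝ => m ^ η * x ^ (-η - α - 1)) (Ioi m) :=
    (integrableOn_Ioi_rpow_of_lt p3 hm0).const_mul _
  have hI12 : IntegrableOn
      (fun x : ℝ => m ^ (-η) * x ^ (η - α - 1) - 2 * x ^ (-α - 1)) (Ioi m) := hI1.sub hI2
  rw [integral_add hI12 hI3, integral_sub hI1 hI2, i1, i2, i3]
  have q1 : η - α - 1 + 1 = η - α := by ring
  have q2 : -α - 1 + 1 = -α := by ring
  have q3 : -η - α - 1 + 1 = -(η + α) := by ring
  rw [q1, q2, q3]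
  have e1' : m ^ (-η) * m ^ (η - α) = m ^ (-α) := by
    rw [← Real.rpow_add hm0]; ring_nf
  have e3' : m ^ η * m ^ (-(η + α)) = m ^ (-α) := by
    rw [← Real.rpow_add hm0]; ring_nf
  have hne1 : (η - α : ℝ) ≠ 0 := by intro h; linarith
  have hne2 : (α - η : ℝ) ≠ 0 := by intro h; linarith
  have hne3 : (η + α : ℝ) ≠ 0 := by intro h; linarith
  have hne4 : (α : ℝ) ≠ 0 := by intro h; linarith
  have E1 : m ^ (-η) * (-m ^ (η - α) / (η - α)) = m ^ (-α) / (α - η) := by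
    rw [mul_div_assoc', mul_neg, e1', div_eq_div_iff hne1 hne2]; ring
  have E2 : (2 : ℝ) * (-m ^ (-α) / (-α)) = 2 * (m ^ (-α) / α) := by
    rw [neg_div_neg_eq]
  have E3 : m ^ η * (-m ^ (-(η + α)) / (-(η + α))) = m ^ (-α) / (η + α) := by
    rw [mul_div_assoc', mul_neg, e3', neg_div_neg_eq]
  rw [E1, E2, E3, mul_assoc]
  congr 1
  generalize m ^ (-α) = M
  field_simp
  ring
end

section
/- Let α ∈ (0,1], β ∈ (0,1), and set C_{α,β} = (β Γ(αβ/(1-β)) / Γ(α/(1-β)))^{1/(1-β)}. For any t₀ ≥ 0, the function X_t = C_{α,β} (t-t₀)^{α/(1-β)} 1_{(t₀,∞)}(t) satisfies the Volterra equation X_t = (1/Γ(α)) ∫_0^t (t-s)^{α-1} |X_s|^β sign(X_s) ds for all t > 0. In particular, this deterministic Volterra equation has infinitely many solutions. -/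
open MeasureTheory Set


lemma realBeta {a b c : ℝ} (ha : 0 < a) (hb : 0 < b) (hc : 0 < c) :
    ∫ x in (0:ℝ)..c, x ^ (a - 1) * (c - x) ^ (b - 1) =
      c ^ (a + b - 1) * (Real.Gamma a * Real.Gamma b / Real.Gamma (a + b)) := by
  have hGab : Real.Gamma (a + b) ≠ 0 := (Real.Gamma_pos_of_pos (by linarith)).ne'
  have h1 := Complex.betaIntegral_scaled (a : ℂ) (b : ℂ) hc
  have h2 := Complex.Gamma_mul_Gamma_eq_betaIntegral (s := (a : ℂ)) (t := (b : ℂ))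
    (by simpa using ha) (by simpa using hb)
  have hGc : Complex.Gamma ((a : ℂ) + b) ≠ 0 := by
    rw [show ((a:ℂ) + b) = ((a + b : ℝ) : ℂ) by push_cast; ring, Complex.Gamma_ofReal]
    exact_mod_cast hGab
  have hbeta : Complex.betaIntegral a b =
      Complex.Gamma a * Complex.Gamma b / Complex.Gamma ((a : ℂ) + b) := by
    rw [eq_div_iff hGc, h2, mul_comm]
  have hofReal : (∫ x in (0:ℝ)..c, (x : ℂ) ^ ((a : ℂ) - 1) * ((c : ℂ) - x) ^ ((b : ℂ) - 1))
      = ((∫ x in (0:ℝ)..c, x ^ (a - 1) * (c - x) ^ (b - 1) : ℝ) : ℂ) := by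
    rw [← intervalIntegral.integral_ofReal]
    refine intervalIntegral.integral_congr fun x hx => ?_
    rw [Set.uIcc_of_le hc.le] at hx
    rw [Complex.ofReal_mul, Complex.ofReal_cpow hx.1, Complex.ofReal_cpow (sub_nonneg.mpr hx.2)]
    push_cast
    ring
  have := h1
  rw [hofReal, hbeta] at this
  have hrhs : ((c : ℂ)) ^ ((a : ℂ) + b - 1) *
      (Complex.Gamma a * Complex.Gamma b / Complex.Gamma ((a : ℂ) + b)) =
      ((c ^ (a + b - 1) * (Real.Gamma a * Real.Gamma b / Real.Gamma (a + b)) : ℝ) : ℂ) := by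
    rw [show ((a:ℂ) + b - 1) = ((a + b - 1 : ℝ) : ℂ) by push_cast; ring,
      show ((a:ℂ) + b) = ((a + b : ℝ) : ℂ) by push_cast; ring,
      ← Complex.ofReal_cpow hc.le, Complex.Gamma_ofReal, Complex.Gamma_ofReal,
      Complex.Gamma_ofReal]
    push_cast
    ring
  rw [hrhs] at this
  exact_mod_cast this


/-- The explicit nonzero solution `X_t = C_{α,β} (t-t₀)^{α/(1-β)} 1_{(t₀,∞)}(t)` of the
deterministic fractional Volterra equation. -/
noncomputable def volterraSol (α β t₀ t : ℝ) : ℝ :=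
  if t₀ < t then
    (β * Real.Gamma (α * β / (1 - β)) / Real.Gamma (α / (1 - β))) ^ ((1:ℝ) / (1 - β)) *
      (t - t₀) ^ (α / (1 - β))
  else 0

/-- For every `t₀ ≥ 0`, the function `volterraSol α β t₀` solves
`X_t = (1/Γ(α)) ∫_0^t (t-s)^(α-1) |X_s|^β sign(X_s) ds` for all `t > 0`;
in particular this deterministic Volterra equation has infinitely many solutions. -/
theorem stmt_12 (α β : ℝ) (hα : α ∈ Set.Ioc (0:ℝ) 1) (hβ : β ∈ Set.Ioo (0:ℝ) 1) :
    (∀ t₀ ≥ (0:ℝ), ∀ t > (0:ℝ),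
      volterraSol α β t₀ t = (Real.Gamma α)⁻¹ *
        ∫ s in Set.Ioo (0:ℝ) t,
          (t - s) ^ (α - 1) * |volterraSol α β t₀ s| ^ β * Real.sign (volterraSol α β t₀ s)) ∧
    Set.Infinite {X : ℝ → ℝ | ∀ t > (0:ℝ),
      X t = (Real.Gamma α)⁻¹ *
        ∫ s in Set.Ioo (0:ℝ) t, (t - s) ^ (α - 1) * |X s| ^ β * Real.sign (X s)} := by

  obtain ⟨hα0, hα1⟩ := hα
  obtain ⟨hβ0, hβ1⟩ := hβ
  have h1β : (0:ℝ) < 1 - β := by linarith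
  set γ : ℝ := α / (1 - β) with hγdef
  set e : ℝ := α * β / (1 - β) with hedef
  have hγ : 0 < γ := div_pos hα0 h1β
  have he : 0 < e := div_pos (mul_pos hα0 hβ0) h1β
  have heγ : e = γ * β := by rw [hγdef, hedef]; ring
  have heα : e + α = γ := by rw [hγdef, hedef]; field_simp; ring
  have hK : 0 < β * Real.Gamma e / Real.Gamma γ :=
    div_pos (mul_pos hβ0 (Real.Gamma_pos_of_pos he)) (Real.Gamma_pos_of_pos hγ)
  set C : ℝ := (β * Real.Gamma e / Real.Gamma γ) ^ ((1:ℝ) / (1 - β)) with hCdef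
  have hCpos : 0 < C := Real.rpow_pos_of_pos hK _
  have hCid : C ^ β * (β * Real.Gamma e / Real.Gamma γ) = C := by
    rw [hCdef, ← Real.rpow_mul hK.le, ← Real.rpow_add_one hK.ne']
    congr 1
    field_simp
    ring
  have hsol : ∀ t₀ ≥ (0:ℝ), ∀ t > (0:ℝ),
      volterraSol α β t₀ t = (Real.Gamma α)⁻¹ *
        ∫ s in Set.Ioo (0:ℝ) t,
          (t - s) ^ (α - 1) * |volterraSol α β t₀ s| ^ β * Real.sign (volterraSol α β t₀ s) := by
    intro t₀ ht₀ t ht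
    by_cases hlt : t₀ < t
    · have hzero : ∀ s, ¬ t₀ < s → volterraSol α β t₀ s = 0 := fun s hs => if_neg hs
      have hval : ∀ s, t₀ < s → volterraSol α β t₀ s = C * (s - t₀) ^ γ := fun s hs => if_pos hs
      have hstep1 : (∫ s in Set.Ioo (0:ℝ) t,
            (t - s) ^ (α - 1) * |volterraSol α β t₀ s| ^ β * Real.sign (volterraSol α β t₀ s))
          = ∫ s in Set.Ioo t₀ t,
            (t - s) ^ (α - 1) * |volterraSol α β t₀ s| ^ β * Real.sign (volterraSol α β t₀ s) := by
        refine setIntegral_eq_of_subset_of_ae_diff_eq_zero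
          measurableSet_Ioo.nullMeasurableSet
          (Set.Ioo_subset_Ioo (by linarith) le_rfl) ?_
        filter_upwards with s hs
        obtain ⟨hs1, hs2⟩ := hs
        have : ¬ t₀ < s := by
          by_contra h
          exact hs2 ⟨h, hs1.2⟩
        rw [hzero s this, Real.sign_zero, mul_zero]
      have hstep2 : (∫ s in Set.Ioo t₀ t,
            (t - s) ^ (α - 1) * |volterraSol α β t₀ s| ^ β * Real.sign (volterraSol α β t₀ s))
          = ∫ s in Set.Ioo t₀ t, C ^ β * ((s - t₀) ^ e * (t - s) ^ (α - 1)) := by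
        refine setIntegral_congr_fun measurableSet_Ioo fun s hs => ?_
        have hXpos : 0 < C * (s - t₀) ^ γ :=
          mul_pos hCpos (Real.rpow_pos_of_pos (by linarith [hs.1]) _)
        rw [hval s hs.1, Real.sign_of_pos hXpos, abs_of_pos hXpos,
          Real.mul_rpow hCpos.le (Real.rpow_nonneg (by linarith [hs.1]) _),
          ← Real.rpow_mul (by linarith [hs.1] : (0:ℝ) ≤ s - t₀), ← heγ]
        ring
      have hstep3 : (∫ s in Set.Ioo t₀ t, C ^ β * ((s - t₀) ^ e * (t - s) ^ (α - 1)))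
          = C ^ β * ∫ s in t₀..t, (s - t₀) ^ e * (t - s) ^ (α - 1) := by
        rw [intervalIntegral.integral_of_le hlt.le, ← MeasureTheory.integral_Ioc_eq_integral_Ioo,
          ← MeasureTheory.integral_const_mul]
      have hshift : (∫ s in t₀..t, (s - t₀) ^ e * (t - s) ^ (α - 1))
          = ∫ x in (0:ℝ)..(t - t₀), x ^ (e + 1 - 1) * ((t - t₀) - x) ^ (α - 1) := by
        have h := intervalIntegral.integral_comp_add_right
          (fun s => (s - t₀) ^ e * (t - s) ^ (α - 1)) t₀ (a := 0) (b := t - t₀)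
        simp only [zero_add, sub_add_cancel] at h
        rw [← h]
        refine intervalIntegral.integral_congr fun x hx => ?_
        have h1 : x + t₀ - t₀ = x := by ring
        have h2 : t - (x + t₀) = (t - t₀) - x := by ring
        have h3 : e + 1 - 1 = e := by ring
        rw [h1, h2, h3]
      have hbeta := realBeta (a := e + 1) (b := α) (c := t - t₀)
        (by linarith) hα0 (by linarith)
      have hfinal : (Real.Gamma α)⁻¹ * (C ^ β *
          ((t - t₀) ^ (e + 1 + α - 1) *
            (Real.Gamma (e + 1) * Real.Gamma α / Real.Gamma (e + 1 + α))))
          = C * (t - t₀) ^ γ := by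
        have hee : e + 1 + α - 1 = γ := by rw [← heα]; ring
        have heA : e + 1 + α = γ + 1 := by rw [← heα]; ring
        rw [hee, heA, Real.Gamma_add_one he.ne', Real.Gamma_add_one hγ.ne']
        have hGα : Real.Gamma α ≠ 0 := (Real.Gamma_pos_of_pos hα0).ne'
        have hGγ : Real.Gamma γ ≠ 0 := (Real.Gamma_pos_of_pos hγ).ne'
        have hrw : (Real.Gamma α)⁻¹ * (C ^ β *
            ((t - t₀) ^ γ * (e * Real.Gamma e * Real.Gamma α / (γ * Real.Gamma γ))))
            = (C ^ β * (β * Real.Gamma e / Real.Gamma γ)) * (t - t₀) ^ γ := by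
          rw [heγ]
          field_simp
        rw [hrw, hCid]
      rw [show volterraSol α β t₀ t = C * (t - t₀) ^ γ from if_pos hlt,
        hstep1, hstep2, hstep3, hshift, hbeta, hfinal]
    · rw [show volterraSol α β t₀ t = 0 from if_neg hlt]
      have : (∫ s in Set.Ioo (0:ℝ) t,
          (t - s) ^ (α - 1) * |volterraSol α β t₀ s| ^ β * Real.sign (volterraSol α β t₀ s))
          = ∫ _ in Set.Ioo (0:ℝ) t, (0:ℝ) := by
        refine setIntegral_congr_fun measurableSet_Ioo fun s hs => ?_
        have : ¬ t₀ < s := by push_neg at hlt ⊢; linarith [hs.2]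
        rw [show volterraSol α β t₀ s = 0 from if_neg this, Real.sign_zero, mul_zero]
      rw [this]
      simp
  refine ⟨hsol, ?_⟩
  have key : ∀ a b : ℝ, a < b → volterraSol α β a ≠ volterraSol α β b := by
    intro a b h hEq
    have h1 := congrFun hEq b
    rw [show volterraSol α β a b = C * (b - a) ^ γ from if_pos h,
      show volterraSol α β b b = 0 from if_neg (lt_irrefl b)] at h1
    exact (mul_pos hCpos (Real.rpow_pos_of_pos (sub_pos.mpr h) γ)).ne' h1
  refine Set.infinite_of_injOn_mapsTo (f := fun t₀ => volterraSol α β t₀)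
    (s := Set.Ici (0:ℝ)) ?_ ?_ (Set.Ici_infinite 0)
  · intro a ha b hb hab
    by_contra hne
    rcases lt_or_gt_of_ne hne with h | h
    · exact key a b h hab
    · exact key b a h hab.symm
  · intro t₀ ht₀
    exact hsol t₀ ht₀
end
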